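/- arXiv:1512.08272 — 3 statements merged into one kernel-verified Lean document; each statement's English description precedes it below -/
import Mathlib

section
/- If the system $\{L_1,\dots,L_k\}$ of subspaces of $\mathbb{R}^d$ is transitive, i.e. the group $\mathcal{G}$ generated by $\mathcal{G}_1,\dots,\mathcal{G}_k$ acts transitively on the unit sphere $S^{d-1}$, then the system has the Orthogonal Non-Splitting Property (ONSP). -/
/-! A splitting `ℝ^d = B₁ ⊕ B₂` as in the definition of ONSP is preserved by every generator of
`𝒢`: a rotation in `𝒢ᵢ` with `Lᵢ ⊆ B₁` fixes `B₂ = B₁ᗮ` pointwise and hence maps `B₁` onto itself,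
and symmetrically when `Lᵢ ⊆ B₂`. So all of `𝒢` stabilizes `B₁`, and cannot move a unit vector
of `B₁` to a unit vector of `B₂`. -/

noncomputable section

/-- The group `𝒢ᵢ` of special orthogonal transformations of `ℝ^d` fixing `Aᵢ = Lᵢᗮ`
pointwise (equivalently, rotations across `Aᵢ`). -/
def rotationsFixing {d : ℕ} (L : Submodule ℝ (EuclideanSpace ℝ (Fin d))) :
    Set (EuclideanSpace ℝ (Fin d) ≃ₗᵢ[ℝ] EuclideanSpace ℝ (Fin d)) :=
  {U | LinearEquiv.det U.toLinearEquiv = 1 ∧ ∀ a ∈ Lᗮ, U a = a}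

/-- The subgroup `𝒢` of `SO(d)` generated by `𝒢₁, …, 𝒢ₖ`. -/
def rotGroup {d k : ℕ} (L : Fin k → Submodule ℝ (EuclideanSpace ℝ (Fin d))) :
    Subgroup (EuclideanSpace ℝ (Fin d) ≃ₗᵢ[ℝ] EuclideanSpace ℝ (Fin d)) :=
  Subgroup.closure (⋃ i, rotationsFixing (L i))

/-- Transitivity of the system `{L₁,…,L_k}`: `𝒢` acts transitively on the unit sphere. -/
def IsTransitiveSystem {d k : ℕ} (L : Fin k → Submodule ℝ (EuclideanSpace ℝ (Fin d))) : Prop :=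
  ∀ u w : EuclideanSpace ℝ (Fin d), ‖u‖ = 1 → ‖w‖ = 1 → ∃ U ∈ rotGroup L, U u = w

/-- The Orthogonal Non-Splitting Property. -/
def HasONSP {d k : ℕ} (L : Fin k → Submodule ℝ (EuclideanSpace ℝ (Fin d))) : Prop :=
  ¬ ∃ B₁ B₂ : Submodule ℝ (EuclideanSpace ℝ (Fin d)),
      B₁ ≠ ⊥ ∧ B₂ ≠ ⊥ ∧ (∀ x ∈ B₁, ∀ y ∈ B₂, inner ℝ x y = (0 : ℝ)) ∧ B₁ ⊔ B₂ = ⊤ ∧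
      ∀ i, L i ≤ B₁ ∨ L i ≤ B₂

namespace Submodule

variable {𝕜 E : Type*} [RCLike 𝕜] [NormedAddCommGroup E] [InnerProductSpace 𝕜 E]

theorem IsOrtho.eq_orthogonal_of_sup_eq_top {U V : Submodule 𝕜 E} (h : U ⟂ V)
    (hsup : U ⊔ V = ⊤) : U = Vᗮ :=
  calc U = U ⊔ V ⊓ Vᗮ := by rw [inf_orthogonal_eq_bot, sup_bot_eq]
    _ = (U ⊔ V) ⊓ Vᗮ := (sup_inf_assoc_of_le V (isOrtho_iff_le.mp h)).symm
    _ = Vᗮ := by rw [hsup, top_inf_eq]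

theorem map_eq_self_of_forall_apply_eq {K : Submodule 𝕜 E} {f : E →ₗ[𝕜] E}
    (hf : ∀ x ∈ K, f x = x) : K.map f = K := by
  refine le_antisymm (map_le_iff_le_comap.mpr fun x hx => ?_) fun x hx => ?_
  · simpa [hf x hx] using hx
  · exact hf x hx ▸ mem_map_of_mem hx

theorem exists_mem_norm_eq_one {K : Submodule 𝕜 E} (hK : K ≠ ⊥) : ∃ x ∈ K, ‖x‖ = 1 := by
  obtain ⟨x, hx, hx0⟩ := exists_mem_ne_zero_of_ne_bot hK
  exact ⟨(‖x‖⁻¹ : 𝕜) • x, K.smul_mem _ hx, norm_smul_inv_norm hx0⟩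

def isometryStabilizer (K : Submodule 𝕜 E) : Subgroup (E ≃ₗᵢ[𝕜] E) where
  carrier := {U | K.map (U.toLinearEquiv : E →ₗ[𝕜] E) = K}
  one_mem' := map_id K
  mul_mem' {U V} hU hV := (map_comp _ _ K).trans ((congrArg _ hV).trans hU)
  inv_mem' {U} hU := by
    change K.map (U.toLinearEquiv.symm : E →ₗ[𝕜] E) = K
    conv_lhs => rw [← (hU : K.map (U.toLinearEquiv : E →ₗ[𝕜] E) = K)]
    rw [← map_comp, LinearEquiv.symm_comp, map_id]

theorem mem_isometryStabilizer {K : Submodule 𝕜 E} {U : E ≃ₗᵢ[𝕜] E} :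
    U ∈ K.isometryStabilizer ↔ K.map (U.toLinearEquiv : E →ₗ[𝕜] E) = K :=
  Iff.rfl

theorem mem_isometryStabilizer_of_forall_apply_eq {K : Submodule 𝕜 E} {U : E ≃ₗᵢ[𝕜] E}
    (hU : ∀ x ∈ K, U x = x) : U ∈ K.isometryStabilizer :=
  map_eq_self_of_forall_apply_eq hU

theorem orthogonal_mem_isometryStabilizer {K : Submodule 𝕜 E} {U : E ≃ₗᵢ[𝕜] E}
    (hU : U ∈ K.isometryStabilizer) : U ∈ Kᗮ.isometryStabilizer := by
  rw [mem_isometryStabilizer, map_orthogonal_equiv, mem_isometryStabilizer.mp hU]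

end Submodule

open Submodule

theorem transitive_implies_ONSP_general (d k : ℕ)
    (L : Fin k → Submodule ℝ (EuclideanSpace ℝ (Fin d)))
    (htr : IsTransitiveSystem L) : HasONSP L := by
  rintro ⟨B₁, B₂, hB₁, hB₂, hperp, hsup, hsub⟩
  have hortho : B₁ ⟂ B₂ := isOrtho_iff_inner_eq.mpr hperp
  have hB₁_eq : B₁ = B₂ᗮ := hortho.eq_orthogonal_of_sup_eq_top hsup
  have hstab : rotGroup L ≤ B₁.isometryStabilizer := by
    refine (Subgroup.closure_le _).mpr ?_
    rintro U ⟨_, ⟨i, rfl⟩, -, hfix⟩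
    rcases hsub i with hLB₁ | hLB₂
    · rw [hB₁_eq]
      exact orthogonal_mem_isometryStabilizer <| mem_isometryStabilizer_of_forall_apply_eq
        fun y hy => hfix y (orthogonal_le hLB₁ (isOrtho_iff_le.mp hortho.symm hy))
    · exact mem_isometryStabilizer_of_forall_apply_eq
        fun y hy => hfix y (orthogonal_le hLB₂ (isOrtho_iff_le.mp hortho hy))
  obtain ⟨u, hu, hu1⟩ := exists_mem_norm_eq_one hB₁
  obtain ⟨w, hw, hw1⟩ := exists_mem_norm_eq_one hB₂
  obtain ⟨U, hU, rfl⟩ := htr u w hu1 hw1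
  have hUu : U u ∈ B₁ := mem_isometryStabilizer.mp (hstab hU) ▸ mem_map_of_mem hu
  have hUu0 : U u = 0 := inner_self_eq_zero.mp (hperp _ hUu _ hw)
  simp [hUu0] at hw1

theorem transitive_implies_ONSP (d k : ℕ) (hd : 2 ≤ d)
    (L : Fin k → Submodule ℝ (EuclideanSpace ℝ (Fin d)))
    (hdim : ∀ i, 2 ≤ Module.finrank ℝ (L i))
    (htr : IsTransitiveSystem L) : HasONSP L :=
  transitive_implies_ONSP_general d k L htr
end
end

section
/- If the system $\{L_1,\dots,L_k\}$ of subspaces of $\mathbb{R}^d$ has the Orthogonal Non-Splitting Property (ONSP), then the natural representation of $\mathcal{G}$ on $\mathbb{R}^d$ is irreducible, i.e. the only linear subspaces of $\mathbb{R}^d$ invariant under every element of $\mathcal{G}$ are $\{0\}$ and $\mathbb{R}^d$. -/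
noncomputable section

/-- Irreducibility of the natural representation of `𝒢` on `ℝ^d`: the only
`𝒢`-invariant subspaces are `{0}` and `ℝ^d`. -/
def IsIrreducibleSystem {d k : ℕ} (L : Fin k → Submodule ℝ (EuclideanSpace ℝ (Fin d))) : Prop :=
  ∀ W : Submodule ℝ (EuclideanSpace ℝ (Fin d)),
    (∀ U ∈ rotGroup L, ∀ x ∈ W, U x ∈ W) → W = ⊥ ∨ W = ⊤

/-!
Let `W` be a `𝒢`-invariant subspace with `W ≠ 0, ℝ^d`. For each `i`, either `W ⊥ Lᵢ`, so that
`Lᵢ ⊆ Wᗮ`, or some `x ∈ W` has nonzero projection `p` onto `Lᵢ`. In the latter case, since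
`dim Lᵢ ≥ 2`, every `w ∈ Lᵢ` with `‖w‖ = ‖p‖` is `U p` for a rotation `U ∈ 𝒢ᵢ` (a product of two
hyperplane reflections), and `U` fixes `x - p ∈ Aᵢ`, so `w - p = U x - x ∈ W`; this forces
`Lᵢ ⊆ W`. Hence `ℝ^d = W ⊕ Wᗮ` is an orthogonal splitting of the system, contradicting the ONSP.
-/

open Module Submodule RealInnerProductSpace

lemma le_of_forall_norm_eq_sub_mem {F : Type*} [NormedAddCommGroup F] [NormedSpace ℝ F]
    {L W : Submodule ℝ F} {p : F} (hp : p ≠ 0)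
    (h : ∀ w ∈ L, ‖w‖ = ‖p‖ → w - p ∈ W) : L ≤ W := by
  have hsphere : ∀ w ∈ L, ‖w‖ = ‖p‖ → w ∈ W := fun w hw hnorm => by
    have h2w : (2 : ℝ) • w = (w - p) - (-w - p) := by rw [two_smul]; abel
    rw [← smul_mem_iff W (two_ne_zero (α := ℝ)), h2w]
    exact W.sub_mem (h w hw hnorm) (h (-w) (neg_mem hw) (by rwa [norm_neg]))
  intro y hy
  rcases eq_or_ne y 0 with rfl | hy0
  · exact W.zero_mem
  have hc : ‖p‖ / ‖y‖ ≠ 0 := div_ne_zero (norm_ne_zero_iff.2 hp) (norm_ne_zero_iff.2 hy0)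
  rw [← smul_mem_iff W hc]
  refine hsphere _ (L.smul_mem _ hy) ?_
  rw [norm_smul, Real.norm_eq_abs, abs_div, abs_norm, abs_norm,
    div_mul_cancel₀ _ (norm_ne_zero_iff.2 hy0)]

section

variable {E : Type*} [NormedAddCommGroup E] [InnerProductSpace ℝ E]

lemma exists_ne_zero_mem_inner_eq_zero {L : Submodule ℝ E} [FiniteDimensional ℝ L]
    (hL : 2 ≤ finrank ℝ L) {w : E} (hw : w ∈ L) : ∃ u ∈ L, u ≠ 0 ∧ ⟪u, w⟫ = 0 := by
  have hsum := finrank_add_inf_finrank_orthogonal ((span_singleton_le_iff_mem w L).2 hw)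
  have hline : finrank ℝ (ℝ ∙ w) ≤ 1 := by
    simpa using finrank_span_le_card (R := ℝ) ({w} : Set E)
  obtain ⟨u, hu, hu0⟩ := exists_mem_ne_zero_of_ne_bot
    (one_le_finrank_iff.1 (by omega : 1 ≤ finrank ℝ ((ℝ ∙ w)ᗮ ⊓ L : Submodule ℝ E)))
  exact ⟨u, hu.2, hu0, mem_orthogonal_singleton_iff_inner_left.1 hu.1⟩

lemma det_reflection_orthogonal_singleton [FiniteDimensional ℝ E] {v : E} (hv : v ≠ 0) :
    (reflection (ℝ ∙ v)ᗮ).toLinearEquiv.det = -1 := by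
  rw [linearEquiv_det_reflection, orthogonal_orthogonal, finrank_span_singleton hv, pow_one]

lemma exists_rotation_fixing_orthogonal [FiniteDimensional ℝ E] {L : Submodule ℝ E}
    (hL : 2 ≤ finrank ℝ L) {p w : E} (hp : p ∈ L) (hw : w ∈ L) (hnorm : ‖p‖ = ‖w‖) :
    ∃ U : E ≃ₗᵢ[ℝ] E, U.toLinearEquiv.det = 1 ∧ (∀ a ∈ Lᗮ, U a = a) ∧ U p = w := by
  rcases eq_or_ne p w with rfl | hpw
  · exact ⟨.refl ℝ E, LinearEquiv.det_refl, fun _ _ => rfl, rfl⟩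
  obtain ⟨u, hu, hu0, huw⟩ := exists_ne_zero_mem_inner_eq_zero hL hw
  have hfix : ∀ v ∈ L, ∀ a ∈ Lᗮ, reflection (ℝ ∙ v)ᗮ a = a := fun v hv a ha =>
    reflection_mem_subspace_eq_self (orthogonal_le ((span_singleton_le_iff_mem v L).2 hv) ha)
  refine ⟨(reflection (ℝ ∙ (p - w))ᗮ).trans (reflection (ℝ ∙ u)ᗮ), ?_, fun a ha => ?_, ?_⟩
  · rw [LinearIsometryEquiv.toLinearEquiv_trans, LinearEquiv.det_trans,
      det_reflection_orthogonal_singleton hu0,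
      det_reflection_orthogonal_singleton (sub_ne_zero.2 hpw)]
    norm_num
  · simp only [LinearIsometryEquiv.trans_apply, hfix _ (L.sub_mem hp hw) a ha, hfix u hu a ha]
  · rw [LinearIsometryEquiv.trans_apply, reflection_sub hnorm]
    exact reflection_mem_subspace_eq_self (mem_orthogonal_singleton_iff_inner_right.2 huw)

lemma le_of_invariant_of_starProjection_ne_zero [FiniteDimensional ℝ E]
    {L W : Submodule ℝ E} (hL : 2 ≤ finrank ℝ L)
    (hW : ∀ U : E ≃ₗᵢ[ℝ] E, U.toLinearEquiv.det = 1 → (∀ a ∈ Lᗮ, U a = a) → ∀ x ∈ W, U x ∈ W)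
    {x : E} (hx : x ∈ W) (hpx : L.starProjection x ≠ 0) : L ≤ W := by
  set p := L.starProjection x
  refine le_of_forall_norm_eq_sub_mem hpx fun w hw hnorm => ?_
  obtain ⟨U, hdet, hfix, hUp⟩ :=
    exists_rotation_fixing_orthogonal hL (L.starProjection_apply_mem x) hw hnorm.symm
  have hUx : U x = w + (x - p) := by
    conv_lhs => rw [← add_sub_cancel p x]
    rw [map_add, hUp, hfix _ (L.sub_starProjection_mem_orthogonal x)]
  have hwp : w - p = U x - x := by rw [hUx]; abel
  rw [hwp]
  exact W.sub_mem (hW U hdet hfix x hx) hx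

lemma le_or_le_orthogonal_of_invariant [FiniteDimensional ℝ E]
    {L W : Submodule ℝ E} (hL : 2 ≤ finrank ℝ L)
    (hW : ∀ U : E ≃ₗᵢ[ℝ] E, U.toLinearEquiv.det = 1 → (∀ a ∈ Lᗮ, U a = a) → ∀ x ∈ W, U x ∈ W) :
    L ≤ W ∨ L ≤ Wᗮ := by
  by_cases h : ∃ x ∈ W, L.starProjection x ≠ 0
  · obtain ⟨x, hx, hpx⟩ := h
    exact .inl (le_of_invariant_of_starProjection_ne_zero hL hW hx hpx)
  · push Not at h
    exact .inr (isOrtho_iff_le.1 (isOrtho_iff_le.2 fun x hx =>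
      (L.starProjection_apply_eq_zero_iff).1 (h x hx)).symm)

end

theorem ONSP_implies_irreducible_general (d k : ℕ)
    (L : Fin k → Submodule ℝ (EuclideanSpace ℝ (Fin d)))
    (hdim : ∀ i, 2 ≤ Module.finrank ℝ (L i))
    (honsp : HasONSP L) : IsIrreducibleSystem L := by
  intro W hW
  by_contra! ⟨hbot, htop⟩
  have hsplit : ∀ i, L i ≤ W ∨ L i ≤ Wᗮ := fun i =>
    le_or_le_orthogonal_of_invariant (hdim i) fun U hdet hfix =>
      hW U (Subgroup.subset_closure (Set.mem_iUnion.2 ⟨i, hdet, hfix⟩))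
  exact honsp ⟨W, Wᗮ, hbot, mt orthogonal_eq_bot_iff.1 htop,
    fun _ hx _ hy => inner_right_of_mem_orthogonal hx hy, sup_orthogonal_of_hasOrthogonalProjection,
    hsplit⟩

theorem ONSP_implies_irreducible (d k : ℕ) (hd : 2 ≤ d)
    (L : Fin k → Submodule ℝ (EuclideanSpace ℝ (Fin d)))
    (hdim : ∀ i, 2 ≤ Module.finrank ℝ (L i))
    (honsp : HasONSP L) : IsIrreducibleSystem L :=
  ONSP_implies_irreducible_general d k L hdim honsp
end
end

section
/- Let $G$ be a (simple, undirected) graph on the vertex set $\{1,\dots,N\}$ with edge set $E$. The system of subspaces $\{L_{ij} : \{i,j\} \in E\}$ of $\mathcal{Z}$ has the Orthogonal Non-Splitting Property (there is no orthogonal splitting $\mathcal{Z} = B_1 \oplus B_2$ with $B_1 \ne 0$, $B_2 \ne 0$, $B_1 \perp B_2$, and every $L_{ij}$ with $\{i,j\} \in E$ contained in $B_1$ or in $B_2$) if and only if the graph $G$ is connected. -/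
noncomputable section

/-- The zero-total-momentum subspace `𝒵 ⊆ (ℝ^ν)^N`. -/
def momZero (N ν : ℕ) : Submodule ℝ (EuclideanSpace ℝ (Fin N × Fin ν)) where
  carrier := {v | ∀ a : Fin ν, ∑ i : Fin N, v (i, a) = 0}
  add_mem' := by
    intro x y hx hy a
    simp only [Set.mem_setOf_eq, PiLp.add_apply] at *
    simp [Finset.sum_add_distrib, hx a, hy a]
  zero_mem' := by intro a; simp
  smul_mem' := by
    intro c x hx a
    simp only [Set.mem_setOf_eq, PiLp.smul_apply, smul_eq_mul] at *
    simp [← Finset.mul_sum, hx a]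

/-- The base space `L_{ij} ⊆ 𝒵`: velocities supported on balls `i` and `j`. -/
def baseSpace (N ν : ℕ) (i j : Fin N) : Submodule ℝ ↥(momZero N ν) where
  carrier := {v | ∀ m : Fin N, m ≠ i → m ≠ j → ∀ a : Fin ν,
    (v : EuclideanSpace ℝ (Fin N × Fin ν)) (m, a) = 0}
  add_mem' := by
    intro x y hx hy m hm1 hm2 a
    simp [Set.mem_setOf_eq] at *
    simp [hx m hm1 hm2 a, hy m hm1 hm2 a]
  zero_mem' := by intro m _ _ a; simp
  smul_mem' := by
    intro c x hx m hm1 hm2 a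
    simp [Set.mem_setOf_eq] at *
    simp [hx m hm1 hm2 a]


/-!
If `G` is connected, the base spaces of two edges sharing a ball are never orthogonal, so all of
them lie in one summand, say `B₁`. A vector of `B₂` is then orthogonal to every `L_{ij}`, i.e. gives
equal velocities to adjacent balls, hence to all balls, and vanishes by zero total momentum.

If `G` is disconnected, let `S` be a connected component. When `S` has two balls, the velocities
supported on `S` and their orthogonal complement split `𝒵` compatibly with every edge, and
symmetrically for the complement of `S`. Otherwise `N = 2` and `G` has no edge, so any nontrivial
splitting works; one exists because `ν ≥ 2`.
-/

open scoped RealInnerProductSpace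

/-- The Orthogonal Non-Splitting Property of the system `L` says that no such splitting exists. -/
def IsOrthSplitting {E ι : Type*} [NormedAddCommGroup E] [InnerProductSpace ℝ E]
    (r : ι → ι → Prop) (L : ι → ι → Submodule ℝ E) (B₁ B₂ : Submodule ℝ E) : Prop :=
  B₁ ≠ ⊥ ∧ B₂ ≠ ⊥ ∧ (∀ x ∈ B₁, ∀ y ∈ B₂, inner ℝ x y = (0 : ℝ)) ∧ B₁ ⊔ B₂ = ⊤ ∧
    ∀ i j, r i j → (L i j ≤ B₁ ∨ L i j ≤ B₂)

theorem isOrthSplitting_orthogonal {E ι : Type*} [NormedAddCommGroup E] [InnerProductSpace ℝ E]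
    {r : ι → ι → Prop} {L : ι → ι → Submodule ℝ E} (B : Submodule ℝ E)
    [B.HasOrthogonalProjection] (hB₀ : B ≠ ⊥) (hB₁ : B ≠ ⊤)
    (hL : ∀ i j, r i j → L i j ≤ B ∨ L i j ≤ Bᗮ) : IsOrthSplitting r L B Bᗮ :=
  ⟨hB₀, by rwa [Ne, Submodule.orthogonal_eq_bot_iff],
    fun _ hx _ hy => Submodule.inner_right_of_mem_orthogonal hx hy,
    Submodule.sup_orthogonal_of_hasOrthogonalProjection, hL⟩

theorem SimpleGraph.Reachable.of_forall_adj_imp {V : Type*} {G : SimpleGraph V} {P : V → Prop}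
    (hP : ∀ u v, G.Adj u v → P u → P v) {u v : V} (huv : G.Reachable u v) (hu : P u) : P v := by
  obtain ⟨p⟩ := huv
  induction p with
  | nil => exact hu
  | cons hadj _ ih => exact ih (hP _ _ hadj hu)

namespace momZero

variable {N ν : ℕ}

def pairVec (i j : Fin N) (a : Fin ν) : momZero N ν :=
  ⟨EuclideanSpace.single (i, a) 1 - EuclideanSpace.single (j, a) 1, fun b => by
    by_cases hb : b = a <;> simp [Finset.sum_sub_distrib, hb]⟩

theorem pairVec_apply (i j : Fin N) (a : Fin ν) (p : Fin N × Fin ν) :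
    (pairVec i j a).1 p = (if p = (i, a) then 1 else 0) - (if p = (j, a) then 1 else 0) := by
  simp [pairVec]

theorem inner_pairVec_left (i j : Fin N) (a : Fin ν) (y : momZero N ν) :
    ⟪pairVec i j a, y⟫ = y.1 (i, a) - y.1 (j, a) := by
  simp [Submodule.coe_inner, pairVec, inner_sub_left, EuclideanSpace.inner_single_left]

theorem pairVec_ne_zero {i j : Fin N} (h : i ≠ j) (a : Fin ν) : pairVec i j a ≠ 0 := by
  intro hz
  have := congrArg (fun w : momZero N ν => w.1 (i, a)) hz
  simp [pairVec_apply, h] at this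

def supportedOn (N ν : ℕ) (T : Set (Fin N)) : Submodule ℝ (momZero N ν) where
  carrier := {v | ∀ m ∉ T, ∀ a, v.1 (m, a) = 0}
  add_mem' hx hy m hm a := by simp [hx m hm a, hy m hm a]
  zero_mem' _ _ _ := rfl
  smul_mem' c x hx m hm a := by simp [hx m hm a]

theorem baseSpace_eq_supportedOn (i j : Fin N) :
    baseSpace N ν i j = supportedOn N ν {i, j} := by
  ext v
  simp only [baseSpace, supportedOn, Submodule.mem_mk, AddSubmonoid.mem_mk,
    AddSubsemigroup.mem_mk, Set.mem_ofPred_eq, Set.mem_insert_iff, Set.mem_singleton_iff, not_or]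
  exact ⟨fun h m hm => h m hm.1 hm.2, fun h m hi hj => h m ⟨hi, hj⟩⟩

theorem supportedOn_mono {T T' : Set (Fin N)} (h : T ⊆ T') :
    supportedOn N ν T ≤ supportedOn N ν T' :=
  fun _ hv m hm => hv m (fun hmT => hm (h hmT))

theorem supportedOn_isOrtho {T T' : Set (Fin N)} (h : Disjoint T T') :
    supportedOn N ν T ⟂ supportedOn N ν T' := by
  rw [Submodule.isOrtho_iff_inner_eq]
  intro x hx y hy
  rw [Submodule.coe_inner, PiLp.inner_apply]
  refine Finset.sum_eq_zero fun ⟨m, a⟩ _ => ?_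
  by_cases hm : m ∈ T
  · simp [hy m (Set.disjoint_left.1 h hm) a]
  · simp [hx m hm a]

theorem pairVec_mem_supportedOn {T : Set (Fin N)} {i j : Fin N} (hi : i ∈ T) (hj : j ∈ T)
    (a : Fin ν) : pairVec i j a ∈ supportedOn N ν T := by
  intro m hm b
  have : m ≠ i ∧ m ≠ j := ⟨fun h => hm (h ▸ hi), fun h => hm (h ▸ hj)⟩
  simp [pairVec_apply, this]

theorem pairVec_mem_baseSpace (i j : Fin N) (a : Fin ν) : pairVec i j a ∈ baseSpace N ν i j := by
  rw [baseSpace_eq_supportedOn]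
  exact pairVec_mem_supportedOn (by simp) (by simp) a

theorem baseSpace_comm (i j : Fin N) : baseSpace N ν i j = baseSpace N ν j i := by
  rw [baseSpace_eq_supportedOn, baseSpace_eq_supportedOn, Set.pair_comm]

/-- `⟪pairVec a b 0, pairVec c b 0⟫` is `2` if `a = c` and `1` otherwise. -/
theorem baseSpace_not_isOrtho [NeZero ν] {a b c : Fin N} (hab : a ≠ b) (hcb : c ≠ b) :
    ¬ baseSpace N ν a b ⟂ baseSpace N ν c b := by
  intro h
  have h0 := Submodule.isOrtho_iff_inner_eq.1 h _ (pairVec_mem_baseSpace a b 0) _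
    (pairVec_mem_baseSpace c b 0)
  rw [inner_pairVec_left, pairVec_apply, pairVec_apply] at h0
  by_cases hac : a = c <;> simp [hab, hcb, hcb.symm, hac] at h0

variable {G : SimpleGraph (Fin N)} {B C : Submodule ℝ (momZero N ν)}

theorem baseSpace_le_of_adj_of_le [NeZero ν] (hBC : B ⟂ C)
    (hedge : ∀ i j, G.Adj i j → baseSpace N ν i j ≤ B ∨ baseSpace N ν i j ≤ C)
    {a b c : Fin N} (hab : G.Adj a b) (hcb : G.Adj c b) (hB : baseSpace N ν a b ≤ B) :
    baseSpace N ν c b ≤ B :=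
  (hedge c b hcb).resolve_right fun hC => baseSpace_not_isOrtho hab.ne hcb.ne (hBC.mono hB hC)

theorem baseSpace_le_of_preconnected [NeZero ν] (hG : G.Preconnected) (hBC : B ⟂ C)
    (hedge : ∀ i j, G.Adj i j → baseSpace N ν i j ≤ B ∨ baseSpace N ν i j ≤ C)
    {i₀ j₀ : Fin N} (h₀ : G.Adj i₀ j₀) (hB : baseSpace N ν i₀ j₀ ≤ B)
    {i j : Fin N} (hij : G.Adj i j) : baseSpace N ν i j ≤ B := by
  have hstep : ∀ u v, G.Adj u v → (∀ t, G.Adj t u → baseSpace N ν t u ≤ B) →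
      ∀ t, G.Adj t v → baseSpace N ν t v ≤ B := fun u v huv hu _ htv =>
    baseSpace_le_of_adj_of_le hBC hedge huv htv (baseSpace_comm u v ▸ hu v huv.symm)
  exact (hG j₀ j).of_forall_adj_imp hstep (fun _ ht => baseSpace_le_of_adj_of_le hBC hedge h₀ ht hB)
    i hij

theorem eq_zero_of_forall_mem_orthogonal_baseSpace (hG : G.Preconnected) {y : momZero N ν}
    (hy : ∀ i j, G.Adj i j → y ∈ (baseSpace N ν i j)ᗮ) : y = 0 := by
  have hconst : ∀ a m m', y.1 (m', a) = y.1 (m, a) := fun a m m' =>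
    (hG m m').of_forall_adj_imp (P := fun k => y.1 (k, a) = y.1 (m, a))
      (fun u v huv hu => by
        have := Submodule.inner_right_of_mem_orthogonal (pairVec_mem_baseSpace u v a) (hy u v huv)
        rw [inner_pairVec_left] at this
        linarith) rfl
  ext ⟨m, a⟩
  have hsum : ∑ _k : Fin N, y.1 (m, a) = 0 := by simpa only [hconst a m] using y.2 a
  simp only [Finset.sum_const, Finset.card_univ, Fintype.card_fin, nsmul_eq_mul,
    mul_eq_zero, Nat.cast_eq_zero, m.pos.ne', false_or] at hsum
  simpa using hsum

theorem eq_bot_of_isOrtho_of_baseSpace_le (hG : G.Preconnected) (hBC : B ⟂ C)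
    (hle : ∀ i j, G.Adj i j → baseSpace N ν i j ≤ B) : C = ⊥ :=
  (Submodule.eq_bot_iff C).2 fun _ hy => eq_zero_of_forall_mem_orthogonal_baseSpace hG
    fun i j hij => Submodule.orthogonal_le (hle i j hij) (hBC.symm hy)

theorem not_isOrthSplitting_of_connected [NeZero ν] [Nontrivial (Fin N)] (hG : G.Connected)
    (B₁ B₂ : Submodule ℝ (momZero N ν)) : ¬ IsOrthSplitting G.Adj (baseSpace N ν) B₁ B₂ := by
  rintro ⟨hB₁, hB₂, horth, -, hedge⟩
  rw [← Submodule.isOrtho_iff_inner_eq] at horth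
  obtain ⟨v⟩ := hG.nonempty
  obtain ⟨u, h₀⟩ := hG.preconnected.exists_adj_of_nontrivial v
  rcases hedge v u h₀ with h | h
  · exact hB₂ (eq_bot_of_isOrtho_of_baseSpace_le hG.preconnected horth fun _ _ hij =>
      baseSpace_le_of_preconnected hG.preconnected horth hedge h₀ h hij)
  · have hedge' i j (hij : G.Adj i j) := (hedge i j hij).symm
    exact hB₁ (eq_bot_of_isOrtho_of_baseSpace_le hG.preconnected horth.symm fun _ _ hij =>
      baseSpace_le_of_preconnected hG.preconnected horth.symm hedge' h₀ h hij)

theorem isOrthSplitting_supportedOn [NeZero ν] {S : Set (Fin N)} (hS : S.Nontrivial) {t : Fin N}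
    (ht : t ∉ S) (hclosed : ∀ i j, G.Adj i j → (i ∈ S ↔ j ∈ S)) :
    IsOrthSplitting G.Adj (baseSpace N ν) (supportedOn N ν S) (supportedOn N ν S)ᗮ := by
  obtain ⟨s₁, hs₁, s₂, hs₂, hne⟩ := hS
  refine isOrthSplitting_orthogonal _ ?_ ?_ fun i j hij => ?_
  · exact (Submodule.ne_bot_iff _).2 ⟨_, pairVec_mem_supportedOn hs₁ hs₂ 0, pairVec_ne_zero hne 0⟩
  · intro htop
    have := (htop ▸ Submodule.mem_top : pairVec s₁ t 0 ∈ supportedOn N ν S) t ht 0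
    have hts : t ≠ s₁ := fun h => ht (h ▸ hs₁)
    simp [pairVec_apply, hts] at this
  · rw [baseSpace_eq_supportedOn]
    by_cases hi : i ∈ S
    · exact Or.inl (supportedOn_mono (Set.pair_subset hi ((hclosed i j hij).1 hi)))
    · have hj : j ∉ S := mt (hclosed i j hij).2 hi
      exact Or.inr (Submodule.isOrtho_iff_le.1 (supportedOn_isOrtho (by simp [hi, hj])))

theorem isOrthSplitting_of_forall_not_adj {i j : Fin N} (hij : i ≠ j) {a b : Fin ν} (hab : a ≠ b)
    (hG : ∀ i j, ¬ G.Adj i j) :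
    IsOrthSplitting G.Adj (baseSpace N ν) (ℝ ∙ pairVec i j a) (ℝ ∙ pairVec i j a)ᗮ := by
  refine isOrthSplitting_orthogonal _ ?_ ?_ fun i j hij => absurd hij (hG i j)
  · simpa using pairVec_ne_zero hij a
  · intro htop
    have : pairVec i j b ∈ (ℝ ∙ pairVec i j a)ᗮ := by
      rw [Submodule.mem_orthogonal_singleton_iff_inner_right, inner_pairVec_left]
      simp [pairVec_apply, hab]
    rw [htop, Submodule.top_orthogonal_eq_bot, Submodule.mem_bot] at this
    exact pairVec_ne_zero hij b this

theorem exists_isOrthSplitting_of_not_connected [Nontrivial (Fin N)] (hν : 2 ≤ ν)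
    (hG : ¬ G.Connected) : ∃ B₁ B₂, IsOrthSplitting G.Adj (baseSpace N ν) B₁ B₂ := by
  have : NeZero ν := ⟨by omega⟩
  obtain ⟨u, v, huv⟩ : ∃ u v, ¬ G.Reachable u v := by
    simpa [SimpleGraph.Preconnected] using fun h => hG ⟨h⟩
  set S := {m | G.Reachable u m}
  have hclosed : ∀ i j, G.Adj i j → (i ∈ S ↔ j ∈ S) := fun i j hij =>
    ⟨fun h => h.trans hij.reachable, fun h => h.trans hij.symm.reachable⟩
  by_cases hS : S.Nontrivial
  · exact ⟨_, _, isOrthSplitting_supportedOn hS (t := v) huv hclosed⟩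
  by_cases hSc : Sᶜ.Nontrivial
  · exact ⟨_, _, isOrthSplitting_supportedOn hSc (t := u) (by simp [S])
      fun i j hij => not_congr (hclosed i j hij)⟩
  obtain ⟨i, j, hij⟩ := exists_pair_ne (Fin N)
  refine ⟨_, _, isOrthSplitting_of_forall_not_adj hij (a := ⟨0, by omega⟩) (b := ⟨1, hν⟩)
    (by simp [Fin.ext_iff]) fun i j hij => ?_⟩
  by_cases hi : i ∈ S
  · exact hS ⟨i, hi, j, (hclosed i j hij).1 hi, hij.ne⟩
  · exact hSc ⟨i, hi, j, mt (hclosed i j hij).2 hi, hij.ne⟩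

end momZero

/-- The system `{L_{ij} : {i,j} ∈ E(G)}` has the Orthogonal Non-Splitting Property
if and only if the collision graph `G` is connected. -/
theorem ONSP_iff_graph_connected (N ν : ℕ) (hN : 2 ≤ N) (hν : 2 ≤ ν)
    (G : SimpleGraph (Fin N)) :
    (¬ ∃ B₁ B₂ : Submodule ℝ ↥(momZero N ν),
        B₁ ≠ ⊥ ∧ B₂ ≠ ⊥ ∧ (∀ x ∈ B₁, ∀ y ∈ B₂, inner ℝ x y = (0 : ℝ)) ∧ B₁ ⊔ B₂ = ⊤ ∧
        ∀ i j : Fin N, G.Adj i j →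
          (baseSpace N ν i j ≤ B₁ ∨ baseSpace N ν i j ≤ B₂)) ↔
      G.Connected := by
  have : NeZero ν := ⟨by omega⟩
  have : Nontrivial (Fin N) := Fin.nontrivial_iff_two_le.2 hN
  exact ⟨not_imp_comm.1 (momZero.exists_isOrthSplitting_of_not_connected hν),
    fun hG ⟨B₁, B₂, h⟩ => momZero.not_isOrthSplitting_of_connected hG B₁ B₂ h⟩
end
end
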